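/- Let (H_t) be a scalar 𝒢-adapted integrable process. Then for every t ≥ 0 and every 1 ≤ r ≤ N, P̄-almost surely, Ē[Λ̄_{t+1} H_t ⟨X_t, e_r⟩ | 𝒴_{t+1}] = ⟨γ_t(H_t X_t), Γ^r(Y_{t+1})⟩; consequently, summing over r, Ē[Λ̄_{t+1} H_t | 𝒴_{t+1}] = Σ_{i=1}^{N} ⟨γ_t(H_t X_t), Γ^i(Y_{t+1})⟩. -/

import Mathlib

/-!
Where `X_t = e_r`, the last factor `λ_{t+1}` of `Λ_{t+1}` equals `Γ^r(Y_{t+1})⁻¹`, so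
`Λ̄_{t+1} H_t ⟨X_t, e_r⟩ = Γ^r(Y_{t+1}) · Λ̄_t H_t ⟨X_t, e_r⟩`: a `𝒴_{t+1}`-measurable factor
times a `𝒢_t`-measurable one. Under `P̄` the observation `Y_{t+1}` is standard Gaussian and
independent of `𝒢_t`, because `λ_{t+1}` exactly undoes the shift and scaling that turn `ε_{t+1}`
into `Y_{t+1}`. Hence conditioning the `𝒢_t`-measurable factor on `𝒴_{t+1} = 𝒴_t ∨ σ(Y_{t+1})`
is the same as conditioning it on `𝒴_t`. Summing over `r` gives the second identity.
-/

open MeasureTheory ProbabilityTheory Finset Matrix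

noncomputable section

/-- Standard normal density `φ`. -/
def stdPDF (u : ℝ) : ℝ := (Real.sqrt (2 * Real.pi))⁻¹ * Real.exp (-u ^ 2 / 2)

/-- `𝒴_t`, the σ-field generated by the observations `Y_s`, `s ≤ t`. -/
def sigY {Ω : Type*} (Y : ℤ → Ω → ℝ) (t : ℕ) : MeasurableSpace Ω :=
  ⨆ s : {s : ℤ // s ≤ (t : ℤ)}, MeasurableSpace.comap (Y s.1) inferInstance

/-- `ℱ_t`, the σ-field generated by the hidden states `X_0, …, X_t`. -/
def sigF {Ω : Type*} {N : ℕ} (X : ℕ → Ω → Fin N → ℝ) (t : ℕ) : MeasurableSpace Ω :=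
  ⨆ s : Fin (t + 1), MeasurableSpace.comap (X s.1) inferInstance

/-- `𝒢_t`, the σ-field generated by `X_0, …, X_t` and the observations up to time `t`. -/
def sigG {Ω : Type*} {N : ℕ} (X : ℕ → Ω → Fin N → ℝ) (Y : ℤ → Ω → ℝ) (t : ℕ) :
    MeasurableSpace Ω := sigF X t ⊔ sigY Y t

/-- The vector `(Y_t, Y_{t-1}, …, Y_{t-p+1})` of the `p` last observations. -/
def past {Ω : Type*} (Y : ℤ → Ω → ℝ) (p : ℕ) (t : ℤ) (ω : Ω) : Fin p → ℝ :=
  fun k => Y (t - (k : ℤ)) ω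

/-- `Λ_t = ∏_{l=1}^t λ_l`, with `λ_{l+1} = ⟨σ, X_l⟩ φ(Y_{l+1}) / φ(ε_{l+1})` and `Λ_0 = 1`. -/
def Lam {Ω : Type*} {N : ℕ} (X : ℕ → Ω → Fin N → ℝ) (Y : ℤ → Ω → ℝ) (ε : ℕ → Ω → ℝ)
    (σv : Fin N → ℝ) (t : ℕ) (ω : Ω) : ℝ :=
  ∏ l ∈ Finset.range t,
    (∑ i, σv i * X l ω i) * stdPDF (Y ((l : ℤ) + 1) ω) / stdPDF (ε (l + 1) ω)

/-- `Γ^i(Y_{t+1}) = φ((Y_{t+1} − F_{e_i}(Y_{t−p+1},…,Y_t))/σ_{e_i}) / (σ_{e_i} φ(Y_{t+1}))`. -/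
def Gam {Ω : Type*} {N p : ℕ} (Y : ℤ → Ω → ℝ) (F : Fin N → (Fin p → ℝ) → ℝ)
    (σv : Fin N → ℝ) (i : Fin N) (t : ℕ) (ω : Ω) : ℝ :=
  stdPDF ((Y ((t : ℤ) + 1) ω - F i (past Y p t ω)) / σv i) /
    (σv i * stdPDF (Y ((t : ℤ) + 1) ω))

open scoped ENNReal

lemma measurable_of_eq_linearMap_add_const {E : Type*} [NormedAddCommGroup E] [NormedSpace ℝ E]
    [FiniteDimensional ℝ E] [MeasurableSpace E] [BorelSpace E] {f : E → ℝ}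
    (hf : ∃ (L : E →ₗ[ℝ] ℝ) (c : ℝ), ∀ v, f v = L v + c) : Measurable f := by
  obtain ⟨L, c, hL⟩ := hf
  rw [funext hL]
  exact (L.continuous_of_finiteDimensional.add continuous_const).measurable

namespace MeasureTheory

variable {Ω : Type*} {mΩ : MeasurableSpace Ω} {μ : Measure Ω}

lemma isPiSystem_image2_inter (m₁ m₂ : MeasurableSpace Ω) :
    IsPiSystem (Set.image2 (· ∩ ·) {s | MeasurableSet[m₁] s} {s | MeasurableSet[m₂] s}) := by
  rintro - ⟨s₁, h₁, s₂, h₂, rfl⟩ - ⟨u₁, g₁, u₂, g₂, rfl⟩ -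
  exact ⟨s₁ ∩ u₁, h₁.inter g₁, s₂ ∩ u₂, h₂.inter g₂, Set.inter_inter_inter_comm _ _ _ _⟩

lemma sup_eq_generateFrom_image2_inter (m₁ m₂ : MeasurableSpace Ω) :
    m₁ ⊔ m₂ = MeasurableSpace.generateFrom
      (Set.image2 (· ∩ ·) {s | MeasurableSet[m₁] s} {s | MeasurableSet[m₂] s}) := by
  refine le_antisymm (sup_le ?_ ?_) (MeasurableSpace.generateFrom_le ?_)
  · exact fun s hs => MeasurableSpace.measurableSet_generateFrom
      ⟨s, hs, Set.univ, MeasurableSet.univ, Set.inter_univ s⟩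
  · exact fun s hs => MeasurableSpace.measurableSet_generateFrom
      ⟨Set.univ, MeasurableSet.univ, s, hs, Set.univ_inter s⟩
  · rintro - ⟨s₁, h₁, s₂, h₂, rfl⟩
    exact (le_sup_left (b := m₂) _ h₁).inter (le_sup_right (a := m₁) _ h₂)

lemma setIntegral_inter_eq_of_indep [IsFiniteMeasure μ] {mG m : MeasurableSpace Ω}
    (hG : mG ≤ mΩ) (hm : m ≤ mΩ) (hind : Indep mG m μ) {g : Ω → ℝ}
    (hg : StronglyMeasurable[mG] g) (hgi : Integrable g μ) {s₁ s₂ : Set Ω}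
    (hs₁ : MeasurableSet[mG] s₁) (hs₂ : MeasurableSet[m] s₂) :
    ∫ x in s₁ ∩ s₂, g x ∂μ = μ.real s₂ * ∫ x in s₁, g x ∂μ := by
  have hind_eq := condExp_indep_eq hG hm (hg.indicator hs₁) hind
  rw [Set.inter_comm, ← setIntegral_indicator (hG _ hs₁), ← integral_indicator (hG _ hs₁),
    ← setIntegral_condExp hm ?_ hs₂,
    setIntegral_congr_ae (hm _ hs₂) (hind_eq.mono fun x hx _ => hx), setIntegral_const, smul_eq_mul]
  exact hgi.indicator (hG _ hs₁)

lemma condExp_sup_eq_of_indep [IsFiniteMeasure μ] {m₁ m₂ mG : MeasurableSpace Ω}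
    (hG : mG ≤ mΩ) (h₁G : m₁ ≤ mG) (h₂ : m₂ ≤ mΩ) (hind : Indep mG m₂ μ) {f : Ω → ℝ}
    (hf : StronglyMeasurable[mG] f) (hfi : Integrable f μ) :
    μ[f | m₁ ⊔ m₂] =ᵐ[μ] μ[f | m₁] := by
  have h₁ : m₁ ≤ mΩ := h₁G.trans hG
  have hm : m₁ ⊔ m₂ ≤ mΩ := sup_le h₁ h₂
  have key (s : Set Ω) (hs : MeasurableSet[m₁ ⊔ m₂] s) :
      ∫ x in s, μ[f | m₁] x ∂μ = ∫ x in s, f x ∂μ := by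
    induction s, hs using MeasurableSpace.induction_on_inter
      (sup_eq_generateFrom_image2_inter m₁ m₂) (isPiSystem_image2_inter m₁ m₂) with
    | empty => simp
    | basic s hs =>
      obtain ⟨s₁, hs₁, s₂, hs₂, rfl⟩ := hs
      rw [setIntegral_inter_eq_of_indep hG h₂ hind (stronglyMeasurable_condExp.mono h₁G)
          integrable_condExp (h₁G _ hs₁) hs₂,
        setIntegral_inter_eq_of_indep hG h₂ hind hf hfi (h₁G _ hs₁) hs₂,
        setIntegral_condExp h₁ hfi hs₁]
    | compl s hs ih =>
      rw [setIntegral_compl (hm _ hs) integrable_condExp, setIntegral_compl (hm _ hs) hfi, ih,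
        integral_condExp h₁]
    | iUnion s hd hs ih =>
      rw [integral_iUnion (fun i => hm _ (hs i)) hd integrable_condExp.integrableOn,
        integral_iUnion (fun i => hm _ (hs i)) hd hfi.integrableOn]
      exact tsum_congr ih
  exact (ae_eq_condExp_of_forall_setIntegral_eq hm hfi
    (fun s _ _ => integrable_condExp.integrableOn) (fun s hs _ => key s hs)
    (stronglyMeasurable_condExp.mono (le_sup_left (b := m₂))).aestronglyMeasurable).symm

end MeasureTheory

namespace ProbabilityTheory

variable {Ω β γ : Type*} {mΩ : MeasurableSpace Ω} {mβ : MeasurableSpace β}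
  {mγ : MeasurableSpace γ} {μ : Measure Ω}

lemma IndepFun.lintegral_comp_eq_lintegral_lintegral [IsFiniteMeasure μ] {U : Ω → β} {V : Ω → γ}
    (hU : Measurable U) (hV : Measurable V) (hind : IndepFun U V μ) {K : β × γ → ℝ≥0∞}
    (hK : Measurable K) :
    ∫⁻ ω, K (U ω, V ω) ∂μ = ∫⁻ ω, ∫⁻ v, K (U ω, v) ∂(μ.map V) ∂μ := by
  rw [← lintegral_map hK (hU.prodMk hV), hind.map_prod_eq_prod_map_map hU.aemeasurable
    hV.aemeasurable, lintegral_prod _ hK.aemeasurable, lintegral_map hK.lintegral_prod_right' hU]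

end ProbabilityTheory

lemma stdPDF_pos (u : ℝ) : 0 < stdPDF u := by unfold stdPDF; positivity

lemma stdPDF_eq_gaussianPDFReal (u : ℝ) : stdPDF u = gaussianPDFReal 0 1 u := by
  simp [stdPDF, gaussianPDFReal]

@[fun_prop]
lemma measurable_stdPDF : Measurable stdPDF := by unfold stdPDF; fun_prop

lemma lintegral_gaussianReal_affine_tilt {a s : ℝ} (hs : 0 < s) {g : ℝ → ℝ≥0∞}
    (hg : Measurable g) :
    ∫⁻ e, ENNReal.ofReal (s * stdPDF (a + s * e) / stdPDF e) * g (a + s * e) ∂gaussianReal 0 1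
      = ∫⁻ y, g y ∂gaussianReal 0 1 := by
  set h : ℝ → ℝ≥0∞ := fun y => ENNReal.ofReal (stdPDF y) * g y
  have hh : Measurable h := by fun_prop
  have haff : Measurable fun e : ℝ => a + s * e := by fun_prop
  have hmap : volume.map (fun e : ℝ => a + s * e) = ENNReal.ofReal s⁻¹ • volume := by
    have : (fun e : ℝ => a + s * e) = (a + ·) ∘ (s * ·) := rfl
    rw [this, ← Measure.map_map (measurable_const_add a) (measurable_const_mul s),
      Real.map_volume_mul_left hs.ne', Measure.map_smul, map_add_left_eq_self,
      abs_of_pos (inv_pos.mpr hs)]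
  have hdensity (e : ℝ) : gaussianPDF 0 1 e *
      (ENNReal.ofReal (s * stdPDF (a + s * e) / stdPDF e) * g (a + s * e)) =
      ENNReal.ofReal s * h (a + s * e) := by
    rw [gaussianPDF, ← stdPDF_eq_gaussianPDFReal, ← mul_assoc,
      ← ENNReal.ofReal_mul (stdPDF_pos e).le, mul_div_cancel₀ _ (stdPDF_pos e).ne',
      ENNReal.ofReal_mul hs.le, mul_assoc]
  rw [gaussianReal_of_var_ne_zero 0 one_ne_zero,
    lintegral_withDensity_eq_lintegral_mul _ (measurable_gaussianPDF 0 1) (by fun_prop),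
    lintegral_withDensity_eq_lintegral_mul _ (measurable_gaussianPDF 0 1) hg]
  simp only [Pi.mul_apply, hdensity]
  calc ∫⁻ e, ENNReal.ofReal s * h (a + s * e)
      = ENNReal.ofReal s * ∫⁻ y, h y ∂(volume.map fun e => a + s * e) := by
        rw [lintegral_const_mul _ (f := fun e => h (a + s * e)) (hh.comp haff),
          lintegral_map hh haff]
    _ = ∫⁻ y, h y := by
        rw [hmap, lintegral_smul_measure, smul_eq_mul, ← mul_assoc,
          ← ENNReal.ofReal_mul hs.le, mul_inv_cancel₀ hs.ne', ENNReal.ofReal_one, one_mul]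
    _ = _ := by simp [h, gaussianPDF, stdPDF_eq_gaussianPDFReal]

lemma lintegral_gaussian_tilt_of_indep {Ω : Type*} {𝒢 mΩ : MeasurableSpace Ω} {μ : Measure Ω}
    [IsFiniteMeasure μ] (h𝒢 : 𝒢 ≤ mΩ) {ε : Ω → ℝ} (hε : Measurable ε)
    (hlaw : μ.map ε = gaussianReal 0 1) (hind : Indep (MeasurableSpace.comap ε inferInstance) 𝒢 μ)
    {V : Ω → ℝ≥0∞} {a s : Ω → ℝ} (hV : Measurable[𝒢] V) (ha : Measurable[𝒢] a)
    (hs : Measurable[𝒢] s) (hs_pos : ∀ ω, 0 < s ω) {g : ℝ → ℝ≥0∞} (hg : Measurable g) :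
    ∫⁻ ω, V ω * (ENNReal.ofReal (s ω * stdPDF (a ω + s ω * ε ω) / stdPDF (ε ω)) *
      g (a ω + s ω * ε ω)) ∂μ = (∫⁻ ω, V ω ∂μ) * ∫⁻ y, g y ∂gaussianReal 0 1 := by
  set U : Ω → ℝ≥0∞ × ℝ × ℝ := fun ω => (V ω, a ω, s ω)
  have hU𝒢 : Measurable[𝒢] U := hV.prodMk (ha.prodMk hs)
  have hind' : IndepFun U ε μ := by
    rw [IndepFun_iff_Indep]
    exact indep_of_indep_of_le_left hind.symm hU𝒢.comap_le
  set K : (ℝ≥0∞ × ℝ × ℝ) × ℝ → ℝ≥0∞ := fun q => q.1.1 *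
    (ENNReal.ofReal (q.1.2.2 * stdPDF (q.1.2.1 + q.1.2.2 * q.2) / stdPDF q.2) *
      g (q.1.2.1 + q.1.2.2 * q.2))
  have hK : Measurable K := by fun_prop
  calc _ = ∫⁻ ω, K (U ω, ε ω) ∂μ := rfl
    _ = ∫⁻ ω, V ω * ∫⁻ y, g y ∂gaussianReal 0 1 ∂μ := by
      rw [hind'.lintegral_comp_eq_lintegral_lintegral (hU𝒢.mono h𝒢 le_rfl) hε hK, hlaw]
      refine lintegral_congr fun ω => ?_
      rw [lintegral_const_mul _ (by fun_prop), lintegral_gaussianReal_affine_tilt (hs_pos ω) hg]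
    _ = _ := lintegral_mul_const _ (hV.mono h𝒢 le_rfl)

section Observations

variable {Ω : Type*} {N p : ℕ} {X : ℕ → Ω → Fin N → ℝ} {Y : ℤ → Ω → ℝ}

lemma comap_le_sigY {t : ℕ} {s : ℤ} (hs : s ≤ t) :
    MeasurableSpace.comap (Y s) inferInstance ≤ sigY Y t :=
  le_iSup (fun s : {s : ℤ // s ≤ t} => MeasurableSpace.comap (Y s.1) inferInstance) ⟨s, hs⟩

lemma measurable_Y_sigY {t : ℕ} {s : ℤ} (hs : s ≤ t) : Measurable[sigY Y t] (Y s) :=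
  Measurable.of_comap_le (comap_le_sigY hs)

lemma sigY_mono {s t : ℕ} (h : s ≤ t) : sigY Y s ≤ sigY Y t :=
  iSup_le fun u => comap_le_sigY (u.2.trans (by exact_mod_cast h))

lemma sigY_succ (t : ℕ) :
    sigY Y (t + 1) = sigY Y t ⊔ MeasurableSpace.comap (Y (t + 1)) inferInstance := by
  refine le_antisymm (iSup_le fun s => ?_) (sup_le (sigY_mono t.le_succ) (comap_le_sigY le_rfl))
  rcases s.2.lt_or_eq with h | h
  · exact (comap_le_sigY (Int.lt_add_one_iff.mp (by exact_mod_cast h))).trans le_sup_left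
  · rw [h]
    exact_mod_cast le_sup_right

lemma measurable_past_sigY {t : ℕ} : Measurable[sigY Y t] (past Y p t) := by
  let _ := sigY Y t
  exact measurable_pi_lambda _ fun k => measurable_Y_sigY (by omega)

lemma measurable_X_sigG {t : ℕ} : Measurable[sigG X Y t] (X t) :=
  Measurable.of_comap_le <| (le_iSup (fun s : Fin (t + 1) =>
    MeasurableSpace.comap (X s.1) inferInstance) (Fin.last t)).trans le_sup_left

lemma sigY_le_sigG (t : ℕ) : sigY Y t ≤ sigG X Y t := le_sup_right

lemma sigG_mono {s t : ℕ} (h : s ≤ t) : sigG X Y s ≤ sigG X Y t := by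
  refine sup_le_sup (iSup_le fun u => ?_) (sigY_mono h)
  exact le_iSup (fun s : Fin (t + 1) => MeasurableSpace.comap (X s.1) inferInstance)
    ⟨u.1, by omega⟩

variable [mΩ : MeasurableSpace Ω]

lemma sigY_le (hYm : ∀ s, Measurable (Y s)) (t : ℕ) : sigY Y t ≤ mΩ :=
  iSup_le fun s => (hYm s.1).comap_le

lemma sigG_le (hXm : ∀ t, Measurable (X t)) (hYm : ∀ s, Measurable (Y s)) (t : ℕ) :
    sigG X Y t ≤ mΩ :=
  sup_le (iSup_le fun s => (hXm s.1).comap_le) (sigY_le hYm t)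

end Observations

section Model

variable {Ω : Type*} {N p : ℕ} {X : ℕ → Ω → Fin N → ℝ} {Y : ℤ → Ω → ℝ} {ε : ℕ → Ω → ℝ}
  {F : Fin N → (Fin p → ℝ) → ℝ} {σv : Fin N → ℝ}

/-- `F_{X_t}(Y_{t-p+1}, …, Y_t)`. -/
def drift (X : ℕ → Ω → Fin N → ℝ) (Y : ℤ → Ω → ℝ) (F : Fin N → (Fin p → ℝ) → ℝ) (t : ℕ)
    (ω : Ω) : ℝ :=
  ∑ i, X t ω i * F i (past Y p t ω)

/-- `σ_{X_t}`. -/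
def noiseScale (X : ℕ → Ω → Fin N → ℝ) (σv : Fin N → ℝ) (t : ℕ) (ω : Ω) : ℝ :=
  ∑ i, X t ω i * σv i

lemma sum_single_one_mul (g : Fin N → ℝ) (i : Fin N) :
    ∑ j, (Pi.single i 1 : Fin N → ℝ) j * g j = g i := by
  simp [Pi.single_apply]

lemma norm_le_one_of_eq_single (hXb : ∀ t ω, ∃ i, X t ω = Pi.single i 1) (t : ℕ) (ω : Ω) :
    ‖X t ω‖ ≤ 1 := by
  obtain ⟨i, hi⟩ := hXb t ω
  rw [hi, Pi.norm_single, norm_one]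

lemma sum_apply_eq_one_of_eq_single (hXb : ∀ t ω, ∃ i, X t ω = Pi.single i 1) (t : ℕ) (ω : Ω) :
    ∑ r, X t ω r = 1 := by
  obtain ⟨i, hi⟩ := hXb t ω
  simp [hi]

lemma MeasureTheory.Integrable.mul_X_apply [MeasurableSpace Ω] {μ : Measure Ω}
    (hXm : ∀ t, Measurable (X t)) (hXb : ∀ t ω, ∃ i, X t ω = Pi.single i 1) {g : Ω → ℝ}
    (hg : Integrable g μ) (t : ℕ) (r : Fin N) : Integrable (fun ω => g ω * X t ω r) μ :=
  (hg.bdd_mul (hXm t).eval.aestronglyMeasurable (ae_of_all _ fun ω =>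
    (norm_le_pi_norm (X t ω) r).trans (norm_le_one_of_eq_single hXb t ω))).congr
    (ae_of_all _ fun _ => mul_comm _ _)

lemma noiseScale_pos (hσ : ∀ i, 0 < σv i) (hXb : ∀ t ω, ∃ i, X t ω = Pi.single i 1) (t : ℕ)
    (ω : Ω) : 0 < noiseScale X σv t ω := by
  obtain ⟨i, hi⟩ := hXb t ω
  rw [noiseScale, hi, sum_single_one_mul]
  exact hσ i

lemma measurable_drift (hF : ∀ i, Measurable (F i)) (t : ℕ) :
    Measurable[sigG X Y t] (drift X Y F t) := by
  let _ := sigG X Y t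
  have hpast : Measurable (past Y p t) := measurable_past_sigY.mono (sigY_le_sigG t) le_rfl
  exact Finset.measurable_sum _ fun i _ =>
    measurable_X_sigG.eval.mul ((hF i).comp hpast)

lemma measurable_noiseScale (t : ℕ) : Measurable[sigG X Y t] (noiseScale X σv t) := by
  let _ := sigG X Y t
  exact Finset.measurable_sum _ fun i _ => measurable_X_sigG.eval.mul measurable_const

lemma Lam_zero (ω : Ω) : Lam X Y ε σv 0 ω = 1 := by simp [Lam]

lemma Lam_succ (t : ℕ) (ω : Ω) : Lam X Y ε σv (t + 1) ω =
    Lam X Y ε σv t ω * (noiseScale X σv t ω * stdPDF (Y (t + 1) ω) / stdPDF (ε (t + 1) ω)) := by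
  simp only [Lam, noiseScale, Finset.prod_range_succ, mul_comm (σv _)]

lemma Lam_pos (hσ : ∀ i, 0 < σv i) (hXb : ∀ t ω, ∃ i, X t ω = Pi.single i 1) (t : ℕ) (ω : Ω) :
    0 < Lam X Y ε σv t ω := by
  induction t with
  | zero => simp [Lam_zero]
  | succ t ih =>
    rw [Lam_succ]
    have := noiseScale_pos hσ hXb t ω
    have := stdPDF_pos (Y (t + 1) ω)
    have := stdPDF_pos (ε (t + 1) ω)
    positivity

lemma measurable_Gam (hF : ∀ i, Measurable (F i)) (r : Fin N) (t : ℕ) :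
    Measurable[sigY Y (t + 1)] (Gam Y F σv r t) := by
  let _ := sigY Y (t + 1)
  have hY : Measurable (Y (t + 1)) := measurable_Y_sigY le_rfl
  have hpast : Measurable (past Y p t) := measurable_past_sigY.mono (sigY_mono t.le_succ) le_rfl
  unfold Gam
  have := hF r
  fun_prop

section Dynamics

variable (hσ : ∀ i, 0 < σv i) (hXb : ∀ t ω, ∃ i, X t ω = Pi.single i 1)
  (hdyn : ∀ (t : ℕ) (ω : Ω), Y (t + 1) ω = drift X Y F t ω + noiseScale X σv t ω * ε (t + 1) ω)
include hσ hXb hdyn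

lemma eps_succ_eq (t : ℕ) (ω : Ω) :
    ε (t + 1) ω = (Y (t + 1) ω - drift X Y F t ω) / noiseScale X σv t ω := by
  rw [hdyn, add_sub_cancel_left, mul_div_cancel_left₀ _ (noiseScale_pos hσ hXb t ω).ne']

lemma measurable_eps_succ (hF : ∀ i, Measurable (F i)) (t : ℕ) :
    Measurable[sigG X Y (t + 1)] (ε (t + 1)) := by
  let _ := sigG X Y (t + 1)
  have hY : Measurable (Y (t + 1)) :=
    (measurable_Y_sigY le_rfl).mono (sigY_le_sigG (t + 1)) le_rfl
  have hdrift : Measurable (drift X Y F t) :=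
    (measurable_drift hF t).mono (sigG_mono t.le_succ) le_rfl
  have hscale : Measurable (noiseScale X σv t) :=
    (measurable_noiseScale t).mono (sigG_mono t.le_succ) le_rfl
  rw [funext (eps_succ_eq hσ hXb hdyn t)]
  exact (hY.sub hdrift).div hscale


lemma measurable_Lam (hF : ∀ i, Measurable (F i)) (t : ℕ) :
    Measurable[sigG X Y t] (Lam X Y ε σv t) := by
  induction t with
  | zero =>
    rw [funext Lam_zero]
    exact measurable_const
  | succ t ih =>
    let _ := sigG X Y (t + 1)
    have hle := sigG_mono (X := X) (Y := Y) t.le_succ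
    have hLam : Measurable (Lam X Y ε σv t) := ih.mono hle le_rfl
    have hscale : Measurable (noiseScale X σv t) := (measurable_noiseScale t).mono hle le_rfl
    have hY : Measurable (Y (t + 1)) :=
      (measurable_Y_sigY le_rfl).mono (sigY_le_sigG (t + 1)) le_rfl
    have hε : Measurable (ε (t + 1)) := measurable_eps_succ hσ hXb hdyn hF t
    rw [funext (Lam_succ t)]
    fun_prop

lemma inv_Lam_succ_mul_X (t : ℕ) (r : Fin N) (ω : Ω) :
    (Lam X Y ε σv (t + 1) ω)⁻¹ * X t ω r =
      Gam Y F σv r t ω * ((Lam X Y ε σv t ω)⁻¹ * X t ω r) := by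
  obtain ⟨i, hi⟩ := hXb t ω
  rcases eq_or_ne i r with rfl | hir
  · have hscale : noiseScale X σv t ω = σv i := by rw [noiseScale, hi, sum_single_one_mul]
    have hdrift : drift X Y F t ω = F i (past Y p t ω) := by
      rw [drift, hi, sum_single_one_mul (fun j => F j _)]
    have hε : ε (t + 1) ω = (Y (t + 1) ω - F i (past Y p t ω)) / σv i := by
      rw [eps_succ_eq hσ hXb hdyn, hdrift, hscale]
    have := hσ i
    have := stdPDF_pos (Y (t + 1) ω)
    have := stdPDF_pos (ε (t + 1) ω)
    have := (Lam_pos (Y := Y) (ε := ε) hσ hXb t ω).ne'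
    rw [Lam_succ, Gam, hscale, ← hε]
    field_simp
  · simp [hi, hir.symm]

end Dynamics

end Model

section ChangeOfMeasure

variable {Ω : Type*} [mΩ : MeasurableSpace Ω] {N p : ℕ} {P Pbar : Measure Ω} [IsFiniteMeasure P]
  {X : ℕ → Ω → Fin N → ℝ} {Y : ℤ → Ω → ℝ} {ε : ℕ → Ω → ℝ}
  {F : Fin N → (Fin p → ℝ) → ℝ} {σv : Fin N → ℝ}
  (hXm : ∀ t, Measurable (X t)) (hYm : ∀ s, Measurable (Y s))
  (hF : ∀ i, Measurable (F i)) (hσ : ∀ i, 0 < σv i)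
  (hXb : ∀ t ω, ∃ i, X t ω = Pi.single i 1)
  (hdyn : ∀ (t : ℕ) (ω : Ω), Y (t + 1) ω = drift X Y F t ω + noiseScale X σv t ω * ε (t + 1) ω)
  (hεlaw : ∀ t : ℕ, P.map (ε (t + 1)) = gaussianReal 0 1)
  (hεindep : ∀ t : ℕ, Indep (MeasurableSpace.comap (ε (t + 1)) inferInstance) (sigG X Y t) P)
  (hPbar : ∀ (t : ℕ) (s : Set Ω), MeasurableSet[sigG X Y t] s →
    Pbar s = ∫⁻ ω in s, ENNReal.ofReal (Lam X Y ε σv t ω) ∂P)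
include hXm hYm hF hσ hXb hdyn hεlaw hεindep hPbar

lemma measure_inter_preimage_Y_succ (t : ℕ) {D : Set Ω} (hD : MeasurableSet[sigG X Y t] D)
    {B : Set ℝ} (hB : MeasurableSet B) :
    Pbar (D ∩ Y (t + 1) ⁻¹' B) = Pbar D * gaussianReal 0 1 B := by
  have hG := sigG_le hXm hYm t
  have hDB : MeasurableSet[sigG X Y (t + 1)] (D ∩ Y (t + 1) ⁻¹' B) :=
    (sigG_mono t.le_succ _ hD).inter
      (sigY_le_sigG (t + 1) _ (measurable_Y_sigY le_rfl hB))
  have hV : Measurable[sigG X Y t] (D.indicator fun ω => ENNReal.ofReal (Lam X Y ε σv t ω)) :=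
    (measurable_Lam hσ hXb hdyn hF t).ennreal_ofReal.indicator hD
  have hindicator (ω : Ω) : (D ∩ Y (t + 1) ⁻¹' B).indicator
      (fun ω => ENNReal.ofReal (Lam X Y ε σv (t + 1) ω)) ω =
      D.indicator (fun ω => ENNReal.ofReal (Lam X Y ε σv t ω)) ω *
        (ENNReal.ofReal (noiseScale X σv t ω * stdPDF (drift X Y F t ω +
          noiseScale X σv t ω * ε (t + 1) ω) / stdPDF (ε (t + 1) ω)) *
        B.indicator 1 (drift X Y F t ω + noiseScale X σv t ω * ε (t + 1) ω)) := by
    rw [← hdyn]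
    by_cases hωD : ω ∈ D <;> by_cases hωB : Y (t + 1) ω ∈ B <;>
      simp [hωD, hωB, Lam_succ, ENNReal.ofReal_mul (Lam_pos hσ hXb t ω).le]
  rw [hPbar (t + 1) _ hDB, ← lintegral_indicator (sigG_le hXm hYm (t + 1) _ hDB),
    lintegral_congr hindicator, lintegral_gaussian_tilt_of_indep hG
      ((measurable_eps_succ hσ hXb hdyn hF t).mono (sigG_le hXm hYm (t + 1)) le_rfl) (hεlaw t)
      (hεindep t) hV (measurable_drift hF t) (measurable_noiseScale t) (noiseScale_pos hσ hXb t)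
      (measurable_one.indicator hB),
    lintegral_indicator (hG _ hD), lintegral_indicator_one hB, hPbar t _ hD]

lemma indep_sigG_comap_Y_succ [IsProbabilityMeasure Pbar] (t : ℕ) :
    Indep (sigG X Y t) (MeasurableSpace.comap (Y (t + 1)) inferInstance) Pbar := by
  rw [Indep_iff]
  rintro D - hD ⟨B, hB, rfl⟩
  have hY := measure_inter_preimage_Y_succ hXm hYm hF hσ hXb hdyn hεlaw hεindep hPbar t
    MeasurableSet.univ hB
  rw [Set.univ_inter, measure_univ, one_mul] at hY
  rw [measure_inter_preimage_Y_succ hXm hYm hF hσ hXb hdyn hεlaw hεindep hPbar t hD hB, hY]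

lemma condExp_inv_Lam_succ_mul_X [IsProbabilityMeasure Pbar] (t : ℕ) {Z : Ω → ℝ}
    (hZ : Measurable[sigG X Y t] Z)
    (hZint : Integrable (fun ω => (Lam X Y ε σv t ω)⁻¹ * Z ω) Pbar)
    (hZint' : Integrable (fun ω => (Lam X Y ε σv (t + 1) ω)⁻¹ * Z ω) Pbar) (r : Fin N) :
    Pbar[fun ω => (Lam X Y ε σv (t + 1) ω)⁻¹ * Z ω * X t ω r | sigY Y (t + 1)] =ᵐ[Pbar]
      fun ω => (Pbar[fun ω' => ((Lam X Y ε σv t ω')⁻¹ * Z ω') • X t ω' | sigY Y t]) ω r *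
        Gam Y F σv r t ω := by
  have hG := sigG_le hXm hYm t
  set W : Ω → ℝ := fun ω => (Lam X Y ε σv t ω)⁻¹ * Z ω * X t ω r
  have hW : StronglyMeasurable[sigG X Y t] W := by
    let _ := sigG X Y t
    exact ((measurable_Lam hσ hXb hdyn hF t).inv.mul hZ
      |>.mul measurable_X_sigG.eval).stronglyMeasurable
  have hWint : Integrable W Pbar := hZint.mul_X_apply hXm hXb t r
  have hshift : (fun ω => (Lam X Y ε σv (t + 1) ω)⁻¹ * Z ω * X t ω r) = Gam Y F σv r t * W := by
    ext ω
    simp only [Pi.mul_apply, W, mul_right_comm _ (Z ω), inv_Lam_succ_mul_X hσ hXb hdyn]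
    ring
  have hGWint : Integrable (Gam Y F σv r t * W) Pbar :=
    hshift ▸ hZint'.mul_X_apply hXm hXb t r
  have hforget : Pbar[W | sigY Y (t + 1)] =ᵐ[Pbar] Pbar[W | sigY Y t] := by
    rw [sigY_succ]
    exact condExp_sup_eq_of_indep hG (sigY_le_sigG t) (hYm _).comap_le
      (indep_sigG_comap_Y_succ hXm hYm hF hσ hXb hdyn hεlaw hεindep hPbar t) hW hWint
  have hproj := (ContinuousLinearMap.proj (R := ℝ) (φ := fun _ : Fin N => ℝ) r).comp_condExp_comm
    (m := sigY Y t) (hZint.smul_bdd 1 (hXm t).aestronglyMeasurable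
      (ae_of_all _ (norm_le_one_of_eq_single hXb t)))
  rw [hshift]
  filter_upwards [condExp_mul_of_stronglyMeasurable_left
    ((measurable_Gam hF r t).stronglyMeasurable) hGWint hWint, hforget, hproj] with ω h₁ h₂ h₃
  rw [h₁, Pi.mul_apply, h₂, mul_comm]
  exact congrArg (· * _) h₃.symm

end ChangeOfMeasure

theorem condexp_density_shift_general
    {Ω : Type*} [MeasurableSpace Ω] (P Pbar : Measure Ω)
    [IsProbabilityMeasure P] [IsProbabilityMeasure Pbar]
    {N p : ℕ}
    (X : ℕ → Ω → Fin N → ℝ) (Y : ℤ → Ω → ℝ) (ε : ℕ → Ω → ℝ)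
    (F : Fin N → (Fin p → ℝ) → ℝ) (σv : Fin N → ℝ)
    -- measurability of the processes
    (hXm : ∀ t, Measurable (X t)) (hYm : ∀ s, Measurable (Y s))
    -- the noise variances are positive
    (hσ : ∀ i, 0 < σv i)
    -- the regression functions are affine
    (hFaff : ∀ i, ∃ (L : (Fin p → ℝ) →ₗ[ℝ] ℝ) (c : ℝ), ∀ v, F i v = L v + c)
    -- the hidden chain takes values in the standard basis vectors of ℝ^N
    (hXb : ∀ t ω, ∃ i, X t ω = Pi.single i 1)
    -- dynamics : Y_{t+1} = F_{X_t}(Y_{t−p+1},…,Y_t) + σ_{X_t} ε_{t+1}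
    (hdyn : ∀ (t : ℕ) (ω : Ω), Y ((t : ℤ) + 1) ω =
      (∑ i, X t ω i * F i (past Y p ((t : ℤ)) ω)) + (∑ i, X t ω i * σv i) * ε (t + 1) ω)
    -- the ε's are i.i.d. standard Gaussian, ε_{t+1} independent of 𝒢_t
    (hεlaw : ∀ t : ℕ, Measure.map (ε (t + 1)) P = gaussianReal 0 1)
    (hεindep : ∀ t : ℕ,
      Indep (MeasurableSpace.comap (ε (t + 1)) inferInstance) (sigG X Y t) P)
    -- P̄ is the measure whose Radon–Nikodym derivative restricted to 𝒢_t equals Λ_t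
    (hPbar : ∀ (t : ℕ) (s : Set Ω), MeasurableSet[sigG X Y t] s →
      Pbar s = ∫⁻ ω in s, ENNReal.ofReal (Lam X Y ε σv t ω) ∂P)
    (H : ℕ → Ω → ℝ)
    (hHadapt : ∀ t, Measurable[sigG X Y t] (H t))
    (hint : ∀ t s : ℕ, Integrable (fun ω => (Lam X Y ε σv s ω)⁻¹ * H t ω) Pbar) :
    ∀ (t : ℕ) (r : Fin N),
      (Pbar[fun ω => (Lam X Y ε σv (t + 1) ω)⁻¹ * H t ω * X t ω r | sigY Y (t + 1)]
        =ᵐ[Pbar] fun ω =>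
          ((Pbar[fun ω' => ((Lam X Y ε σv t ω')⁻¹ * H t ω') • X t ω' | sigY Y t]) ω r) * Gam Y F σv r t ω)
      ∧
      (Pbar[fun ω => (Lam X Y ε σv (t + 1) ω)⁻¹ * H t ω | sigY Y (t + 1)]
        =ᵐ[Pbar] fun ω =>
          ∑ i : Fin N, ((Pbar[fun ω' => ((Lam X Y ε σv t ω')⁻¹ * H t ω') • X t ω' | sigY Y t]) ω i) * Gam Y F σv i t ω) := by
  intro t
  have hF (i : Fin N) : Measurable (F i) := measurable_of_eq_linearMap_add_const (hFaff i)
  have hcoord (r : Fin N) := condExp_inv_Lam_succ_mul_X hXm hYm hF hσ hXb hdyn hεlaw hεindep hPbar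
    t (hHadapt t) (hint t t) (hint t (t + 1)) r
  refine fun r => ⟨hcoord r, ?_⟩
  have hsum : (fun ω => (Lam X Y ε σv (t + 1) ω)⁻¹ * H t ω) =
      ∑ r, fun ω => (Lam X Y ε σv (t + 1) ω)⁻¹ * H t ω * X t ω r := by
    ext ω
    rw [Finset.sum_apply, ← Finset.mul_sum, sum_apply_eq_one_of_eq_single hXb, mul_one]
  rw [hsum]
  filter_upwards [condExp_finsetSum (fun r _ => (hint t (t + 1)).mul_X_apply hXm hXb t r) _,
    ae_all_iff.mpr hcoord]
    with ω hsplit hω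
  rw [hsplit, Finset.sum_apply]
  exact Finset.sum_congr rfl fun r _ => hω r

/-- For a scalar `𝒢`-adapted integrable process `(H_t)`, `P̄`-a.s.
`Ē[Λ̄_{t+1} H_t ⟨X_t, e_r⟩ | 𝒴_{t+1}] = ⟨γ_t(H_t X_t), Γ^r(Y_{t+1})⟩` and, summing over `r`,
`Ē[Λ̄_{t+1} H_t | 𝒴_{t+1}] = Σ_i ⟨γ_t(H_t X_t), Γ^i(Y_{t+1})⟩`. -/
theorem condexp_density_shift
    {Ω : Type*} [MeasurableSpace Ω] (P Pbar : Measure Ω)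
    [IsProbabilityMeasure P] [IsProbabilityMeasure Pbar]
    {N p : ℕ}
    (X : ℕ → Ω → Fin N → ℝ) (Y : ℤ → Ω → ℝ) (ε : ℕ → Ω → ℝ)
    (A : Matrix (Fin N) (Fin N) ℝ) (F : Fin N → (Fin p → ℝ) → ℝ) (σv : Fin N → ℝ)
    -- measurability of the processes
    (hXm : ∀ t, Measurable (X t)) (hYm : ∀ s, Measurable (Y s)) (hεm : ∀ t, Measurable (ε t))
    -- the noise variances are positive
    (hσ : ∀ i, 0 < σv i)
    -- the regression functions are affine
    (hFaff : ∀ i, ∃ (L : (Fin p → ℝ) →ₗ[ℝ] ℝ) (c : ℝ), ∀ v, F i v = L v + c)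
    -- the hidden chain takes values in the standard basis vectors of ℝ^N
    (hXb : ∀ t ω, ∃ i, X t ω = Pi.single i 1)
    -- (X_t) is a Markov chain with transition matrix A (a_{ij} = P(X_{t+1}=e_i | X_t=e_j))
    (hMarkov : ∀ t : ℕ,
      P[fun ω => X (t + 1) ω | sigG X Y t] =ᵐ[P] fun ω => A.mulVec (X t ω))
    -- dynamics : Y_{t+1} = F_{X_t}(Y_{t−p+1},…,Y_t) + σ_{X_t} ε_{t+1}
    (hdyn : ∀ (t : ℕ) (ω : Ω), Y ((t : ℤ) + 1) ω =
      (∑ i, X t ω i * F i (past Y p ((t : ℤ)) ω)) + (∑ i, X t ω i * σv i) * ε (t + 1) ω)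
    -- the ε's are i.i.d. standard Gaussian, ε_{t+1} independent of 𝒢_t
    (hεlaw : ∀ t : ℕ, Measure.map (ε (t + 1)) P = gaussianReal 0 1)
    (hεindep : ∀ t : ℕ,
      Indep (MeasurableSpace.comap (ε (t + 1)) inferInstance) (sigG X Y t) P)
    (hεiid : iIndepFun (fun t : ℕ => ε (t + 1)) P)
    -- P̄ is the measure whose Radon–Nikodym derivative restricted to 𝒢_t equals Λ_t
    (hPbar : ∀ (t : ℕ) (s : Set Ω), MeasurableSet[sigG X Y t] s →
      Pbar s = ∫⁻ ω in s, ENNReal.ofReal (Lam X Y ε σv t ω) ∂P)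
    (H : ℕ → Ω → ℝ)
    (hHadapt : ∀ t, Measurable[sigG X Y t] (H t))
    (hHint : ∀ t : ℕ, Integrable (H t) Pbar)
    (hint : ∀ t s : ℕ, Integrable (fun ω => (Lam X Y ε σv s ω)⁻¹ * H t ω) Pbar) :
    ∀ (t : ℕ) (r : Fin N),
      (Pbar[fun ω => (Lam X Y ε σv (t + 1) ω)⁻¹ * H t ω * X t ω r | sigY Y (t + 1)]
        =ᵐ[Pbar] fun ω =>
          ((Pbar[fun ω' => ((Lam X Y ε σv t ω')⁻¹ * H t ω') • X t ω' | sigY Y t]) ω r) * Gam Y F σv r t ω)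
      ∧
      (Pbar[fun ω => (Lam X Y ε σv (t + 1) ω)⁻¹ * H t ω | sigY Y (t + 1)]
        =ᵐ[Pbar] fun ω =>
          ∑ i : Fin N, ((Pbar[fun ω' => ((Lam X Y ε σv t ω')⁻¹ * H t ω') • X t ω' | sigY Y t]) ω i) * Gam Y F σv i t ω) :=
  condexp_density_shift_general P Pbar X Y ε F σv hXm hYm hσ hFaff hXb hdyn hεlaw hεindep hPbar H
    hHadapt hint
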